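/- arXiv:2511.01444 — 3 statements merged into one kernel-verified Lean document; each statement's English description precedes it below -/
import Mathlib

section
/- Let n ≥ 2, let λ : Fin n → ℝ be a probability vector listed in nonincreasing order, let 1 ≤ k ≤ n−1, and let α > 0 with α ≠ 1. Then the low-rank Rényi entropy dominates the full Rényi entropy: H_α^k(λ) ≥ H_α(λ), where H_α(λ) = (1/(1−α)) · log₂(∑_{i=1}^{n} (λ i)^α). -/
/-!
Splitting `∑ λᵢ^α` into the first `k` terms and the tail, the low-rank sum replaces the tail by
`(n - k) λ̄^α`, where `λ̄` is the mean of the tail. By Jensen's inequality for `t ↦ t^α` this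
increases the sum when `α < 1` and decreases it when `α > 1`; the factor `1 / (1 - α)` has the
matching sign, so in both cases the entropy can only grow.
-/

open Finset

lemma Fin.card_filter_not_val_lt {n m : ℕ} : #{i : Fin n | ¬ (i : ℕ) < m} = n - m := by
  have := card_filter_add_card_filter_not (s := univ) (fun i : Fin n ↦ (i : ℕ) < m)
  rw [Fin.card_filter_val_lt, card_univ, Fintype.card_fin] at this
  omega

section MeanRpow

variable {ι : Type*} (s : Finset ι) {f : ι → ℝ}

lemma sum_inv_card_mul_eq_mean (f : ι → ℝ) :
    ∑ i ∈ s, (#s : ℝ)⁻¹ * f i = (∑ i ∈ s, f i) / #s := by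
  rw [← mul_sum, inv_mul_eq_div]

lemma sum_inv_card_eq_one (hs : s.Nonempty) : ∑ _i ∈ s, (#s : ℝ)⁻¹ = 1 := by
  rw [sum_const, nsmul_eq_mul, mul_inv_cancel₀ (by exact_mod_cast hs.card_ne_zero)]

lemma sum_rpow_le_card_mul_mean_rpow (hf : ∀ i ∈ s, 0 ≤ f i) {p : ℝ} (hp₀ : 0 ≤ p)
    (hp₁ : p ≤ 1) : ∑ i ∈ s, f i ^ p ≤ #s * ((∑ i ∈ s, f i) / #s) ^ p := by
  rcases s.eq_empty_or_nonempty with rfl | hs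
  · simp
  have hjensen := (Real.concaveOn_rpow hp₀ hp₁).le_map_sum (t := s) (w := fun _ ↦ (#s : ℝ)⁻¹)
    (fun _ _ ↦ by positivity) (sum_inv_card_eq_one s hs) hf
  simp only [smul_eq_mul, sum_inv_card_mul_eq_mean] at hjensen
  have hcard : (0 : ℝ) < #s := by exact_mod_cast hs.card_pos
  rwa [div_le_iff₀' hcard] at hjensen

lemma card_mul_mean_rpow_le_sum_rpow (hf : ∀ i ∈ s, 0 ≤ f i) {p : ℝ} (hp : 1 ≤ p) :
    #s * ((∑ i ∈ s, f i) / #s) ^ p ≤ ∑ i ∈ s, f i ^ p := by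
  rcases s.eq_empty_or_nonempty with rfl | hs
  · simp
  have hjensen := Real.rpow_arith_mean_le_arith_mean_rpow s (fun _ ↦ (#s : ℝ)⁻¹) f
    (fun _ _ ↦ by positivity) (sum_inv_card_eq_one s hs) hf hp
  rw [sum_inv_card_mul_eq_mean, sum_inv_card_mul_eq_mean] at hjensen
  have hcard : (0 : ℝ) < #s := by exact_mod_cast hs.card_pos
  rwa [le_div_iff₀' hcard] at hjensen

lemma one_sub_mul_card_mul_mean_rpow_sub_sum_rpow_nonneg (hf : ∀ i ∈ s, 0 ≤ f i) {p : ℝ}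
    (hp : 0 ≤ p) : 0 ≤ (1 - p) * (#s * ((∑ i ∈ s, f i) / #s) ^ p - ∑ i ∈ s, f i ^ p) := by
  rcases le_total p 1 with hp₁ | hp₁
  · exact mul_nonneg (by linarith)
      (by linarith [sum_rpow_le_card_mul_mean_rpow s hf hp hp₁])
  · exact mul_nonneg_of_nonpos_of_nonpos (by linarith)
      (by linarith [card_mul_mean_rpow_le_sum_rpow s hf hp₁])

lemma sum_rpow_pos (hf : ∀ i ∈ s, 0 ≤ f i) (hsum : 0 < ∑ i ∈ s, f i) {p : ℝ} :
    0 < ∑ i ∈ s, f i ^ p := by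
  obtain ⟨i, hi, hfi⟩ := (sum_pos_iff_of_nonneg hf).1 hsum
  exact sum_pos' (fun j hj ↦ Real.rpow_nonneg (hf j hj) p) ⟨i, hi, Real.rpow_pos_of_pos hfi p⟩

lemma card_mul_mean_rpow_pos (hsum : 0 < ∑ i ∈ s, f i) {p : ℝ} :
    0 < #s * ((∑ i ∈ s, f i) / #s) ^ p := by
  have hs : s.Nonempty := nonempty_of_sum_ne_zero hsum.ne'
  have hcard : (0 : ℝ) < #s := by exact_mod_cast hs.card_pos
  positivity

end MeanRpow

lemma one_div_one_sub_mul_logb_le {b α x y : ℝ} (hb : 1 < b) (hx : 0 < x) (hy : 0 < y)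
    (h : 0 ≤ (1 - α) * (y - x)) : 1 / (1 - α) * Real.logb b x ≤ 1 / (1 - α) * Real.logb b y := by
  rcases lt_trichotomy α 1 with hα | rfl | hα
  · have hxy : x ≤ y := by nlinarith
    exact mul_le_mul_of_nonneg_left (Real.logb_le_logb_of_le hb hx hxy)
      (one_div_nonneg.2 (by linarith))
  · simp -- `1 / 0 = 0`, so both sides vanish
  · have hyx : y ≤ x := by nlinarith
    exact mul_le_mul_of_nonpos_left (Real.logb_le_logb_of_le hb hy hyx)
      (one_div_nonpos.2 (by linarith))

open Finset in
theorem lowRank_renyi_entropy_ge_renyi_entropy_general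
    (n : ℕ) (l : Fin n → ℝ)
    (hl0 : ∀ i, 0 ≤ l i) (hl1 : ∑ i, l i = 1)
    (k : ℕ) (hkn : k ≤ n - 1)
    (α : ℝ) (hα : 0 < α)
    (lbar : ℝ)
    (hlbar : lbar = (1 - ∑ i ∈ univ.filter (fun i : Fin n => (i : ℕ) < k), l i)
        / ((n : ℝ) - k)) :
    (1 / (1 - α)) * Real.logb 2 (∑ i, (l i) ^ α) ≤
      (1 / (1 - α)) *
        Real.logb 2 ((∑ i ∈ univ.filter (fun i : Fin n => (i : ℕ) < k), (l i) ^ α)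
          + ((n : ℝ) - k) * lbar ^ α) := by
  set head := univ.filter (fun i : Fin n => (i : ℕ) < k)
  set tail := univ.filter (fun i : Fin n => ¬ (i : ℕ) < k)
  have hsplit (f : Fin n → ℝ) : ∑ i, f i = ∑ i ∈ head, f i + ∑ i ∈ tail, f i :=
    (sum_filter_add_sum_filter_not _ _ f).symm
  have hcard : (#tail : ℝ) = n - k := by
    rw [Fin.card_filter_not_val_lt, Nat.cast_sub (by omega)]
  have hlbar' : lbar = (∑ i ∈ tail, l i) / #tail := by
    rw [hlbar, hcard, ← hl1, hsplit l, add_sub_cancel_left]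
  have hl0' : ∀ s : Finset (Fin n), ∀ i ∈ s, 0 ≤ l i := fun _ i _ ↦ hl0 i
  have hlbar_nonneg : 0 ≤ lbar := hlbar' ▸ div_nonneg (sum_nonneg (hl0' tail)) (Nat.cast_nonneg _)
  have hhead_nonneg : 0 ≤ ∑ i ∈ head, l i ^ α := sum_nonneg fun i _ ↦ Real.rpow_nonneg (hl0 i) α
  rw [← hcard, hsplit]
  apply one_div_one_sub_mul_logb_le one_lt_two
  · rw [← hsplit]; exact sum_rpow_pos _ (hl0' univ) (hl1 ▸ one_pos)
  · rcases lt_or_ge 0 (∑ i ∈ head, l i) with hhead | hhead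
    · have := sum_rpow_pos _ (hl0' head) hhead (p := α)
      positivity
    · have htail : 0 < ∑ i ∈ tail, l i := by linarith [hsplit l]
      have := card_mul_mean_rpow_pos _ htail (p := α)
      rw [← hlbar'] at this
      positivity
  · rw [hlbar']
    convert one_sub_mul_card_mul_mean_rpow_sub_sum_rpow_nonneg tail (hl0' tail) hα.le using 2
    ring

open Finset in
/-- The low-rank Rényi entropy dominates the full Rényi entropy. -/
theorem lowRank_renyi_entropy_ge_renyi_entropy
    (n : ℕ) (hn : 2 ≤ n) (l : Fin n → ℝ)
    (hl0 : ∀ i, 0 ≤ l i) (hl1 : ∑ i, l i = 1)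
    (hmono : ∀ i j : Fin n, i ≤ j → l j ≤ l i)
    (k : ℕ) (hk1 : 1 ≤ k) (hkn : k ≤ n - 1)
    (α : ℝ) (hα : 0 < α) (hα1 : α ≠ 1)
    (lbar : ℝ)
    (hlbar : lbar = (1 - ∑ i ∈ univ.filter (fun i : Fin n => (i : ℕ) < k), l i)
        / ((n : ℝ) - k)) :
    (1 / (1 - α)) * Real.logb 2 (∑ i, (l i) ^ α) ≤
      (1 / (1 - α)) *
        Real.logb 2 ((∑ i ∈ univ.filter (fun i : Fin n => (i : ℕ) < k), (l i) ^ α)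
          + ((n : ℝ) - k) * lbar ^ α) :=
  lowRank_renyi_entropy_ge_renyi_entropy_general n l hl0 hl1 k hkn α hα lbar hlbar
end

section
/- Let n ≥ 3, let λ : Fin n → ℝ be a probability vector listed in nonincreasing order, let α > 0 with α ≠ 1, and let k satisfy 1 ≤ k ≤ n−2. Then the low-rank Rényi entropy is nonincreasing in the rank: H_α^{k+1}(λ) ≤ H_α^{k}(λ). -/
open Finset

lemma sum_filter_lt_succ {n m : ℕ} (hm : m < n) (f : Fin n → ℝ) :
    ∑ i ∈ univ.filter (fun i : Fin n => (i : ℕ) < m + 1), f i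
      = (∑ i ∈ univ.filter (fun i : Fin n => (i : ℕ) < m), f i) + f ⟨m, hm⟩ := by
  have h : univ.filter (fun i : Fin n => (i : ℕ) < m + 1)
      = insert ⟨m, hm⟩ (univ.filter (fun i : Fin n => (i : ℕ) < m)) := by
    ext i
    simp only [mem_filter, mem_univ, true_and, mem_insert, Nat.lt_succ_iff_lt_or_eq,
      Fin.ext_iff]
    tauto
  rw [h, Finset.sum_insert (by simp)]
  ring

open Finset in
/-- The low-rank Rényi entropy is nonincreasing in the rank `k`. -/
theorem lowRank_renyi_entropy_antitone_in_rank
    (n : ℕ) (hn : 3 ≤ n) (l : Fin n → ℝ)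
    (hl0 : ∀ i, 0 ≤ l i) (hl1 : ∑ i, l i = 1)
    (hmono : ∀ i j : Fin n, i ≤ j → l j ≤ l i)
    (k : ℕ) (hk1 : 1 ≤ k) (hkn : k ≤ n - 2)
    (α : ℝ) (hα : 0 < α) (hα1 : α ≠ 1)
    (lbar : ℕ → ℝ)
    (hlbar : ∀ m, lbar m =
      (1 - ∑ i ∈ univ.filter (fun i : Fin n => (i : ℕ) < m), l i) / ((n : ℝ) - m)) :
    (1 / (1 - α)) *
      Real.logb 2
        ((∑ i ∈ univ.filter (fun i : Fin n => (i : ℕ) < k + 1), (l i) ^ α)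
          + ((n : ℝ) - (k + 1)) * lbar (k + 1) ^ α) ≤
    (1 / (1 - α)) *
      Real.logb 2
        ((∑ i ∈ univ.filter (fun i : Fin n => (i : ℕ) < k), (l i) ^ α)
          + ((n : ℝ) - k) * lbar k ^ α) := by
  have hk2 : k + 2 ≤ n := by omega
  have hkn' : k < n := by omega
  have hk1n : k + 1 < n := by omega
  have hnk : (2 : ℝ) ≤ (n : ℝ) - k := by
    have : (k : ℝ) + 2 ≤ (n : ℝ) := by exact_mod_cast hk2
    linarith
  -- partial sums
  set S : ℕ → ℝ := fun m => ∑ i ∈ univ.filter (fun i : Fin n => (i : ℕ) < m), l i with hS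
  have hSle : ∀ m, S m ≤ 1 := by
    intro m
    rw [← hl1]
    exact Finset.sum_le_sum_of_subset_of_nonneg (Finset.filter_subset _ _)
      (fun i _ _ => hl0 i)
  have hlbar_nonneg : ∀ m, m < n → 0 ≤ lbar m := by
    intro m hm
    rw [hlbar m]
    apply div_nonneg
    · linarith [hSle m]
    · have : (m : ℝ) < (n : ℝ) := by exact_mod_cast hm
      linarith
  -- key identity
  have hSsucc : S (k + 1) = S k + l ⟨k, hkn'⟩ := sum_filter_lt_succ hkn' l
  have hden1 : ((n : ℝ) - k) ≠ 0 := by linarith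
  have hden2 : ((n : ℝ) - (k + 1 : ℕ)) ≠ 0 := by
    push_cast; linarith
  have hid1 : ((n : ℝ) - k) * lbar k = 1 - S k := by
    rw [hlbar k]; field_simp; rfl
  have hid2 : ((n : ℝ) - (k + 1)) * lbar (k + 1) = 1 - S (k + 1) := by
    rw [hlbar (k + 1)]
    push_cast
    push_cast at hden2
    field_simp
    rfl
  -- convex combination: lbar k = a * l_k + b * lbar (k+1)
  set a : ℝ := 1 / ((n : ℝ) - k) with ha_def
  set b : ℝ := ((n : ℝ) - (k + 1)) / ((n : ℝ) - k) with hb_def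
  have ha : 0 < a := by positivity
  have hb : 0 < b := by
    apply div_pos (by linarith) (by linarith)
  have hab : a + b = 1 := by
    rw [ha_def, hb_def]; field_simp; ring
  have hcomb : a * l ⟨k, hkn'⟩ + b * lbar (k + 1) = lbar k := by
    have h1 : ((n : ℝ) - k) * lbar k = l ⟨k, hkn'⟩ + ((n : ℝ) - (k + 1)) * lbar (k + 1) := by
      rw [hid1, hid2, hSsucc]; ring
    rw [ha_def, hb_def]
    field_simp
    linarith [h1]
  have hlk_nonneg : 0 ≤ l ⟨k, hkn'⟩ := hl0 _
  have hlbk1 : 0 ≤ lbar (k + 1) := hlbar_nonneg (k + 1) hk1n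
  have hlbk : 0 ≤ lbar k := hlbar_nonneg k hkn'
  -- l 0 > 0
  have hl0pos : 0 < l ⟨0, by omega⟩ := by
    by_contra h
    push_neg at h
    have hz : l ⟨0, by omega⟩ = 0 := le_antisymm h (hl0 _)
    have : ∑ i, l i = 0 := by
      apply Finset.sum_eq_zero
      intro i _
      exact le_antisymm (hz ▸ hmono ⟨0, by omega⟩ i (by simp [Fin.le_def])) (hl0 i)
    rw [hl1] at this; norm_num at this
  -- positivity of both arguments of logb
  have hsum_pos : ∀ m, 1 ≤ m → m ≤ n →
      0 < ∑ i ∈ univ.filter (fun i : Fin n => (i : ℕ) < m), (l i) ^ α := by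
    intro m hm1 hmn
    apply Finset.sum_pos'
    · intro i _; exact Real.rpow_nonneg (hl0 i) α
    · refine ⟨⟨0, by omega⟩, by simpa using (by omega : 0 < m), ?_⟩
      exact Real.rpow_pos_of_pos hl0pos α
  have hA1pos : 0 < (∑ i ∈ univ.filter (fun i : Fin n => (i : ℕ) < k + 1), (l i) ^ α)
      + ((n : ℝ) - (k + 1)) * lbar (k + 1) ^ α := by
    have h1 := hsum_pos (k + 1) (by omega) (by omega)
    have h2 : 0 ≤ ((n : ℝ) - (k + 1)) * lbar (k + 1) ^ α :=
      mul_nonneg (by linarith) (Real.rpow_nonneg hlbk1 α)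
    linarith
  have hA0pos : 0 < (∑ i ∈ univ.filter (fun i : Fin n => (i : ℕ) < k), (l i) ^ α)
      + ((n : ℝ) - k) * lbar k ^ α := by
    have h1 := hsum_pos k hk1 (by omega)
    have h2 : 0 ≤ ((n : ℝ) - k) * lbar k ^ α :=
      mul_nonneg (by linarith) (Real.rpow_nonneg hlbk α)
    linarith
  have hsum_rpow : ∑ i ∈ univ.filter (fun i : Fin n => (i : ℕ) < k + 1), (l i) ^ α
      = (∑ i ∈ univ.filter (fun i : Fin n => (i : ℕ) < k), (l i) ^ α)
        + (l ⟨k, hkn'⟩) ^ α := sum_filter_lt_succ hkn' (fun i => (l i) ^ α)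
  rcases lt_or_gt_of_ne hα1 with hlt | hgt
  · -- α < 1 : concave, A_{k+1} ≤ A_k, and 1/(1-α) > 0
    have hconc := (Real.strictConcaveOn_rpow hα hlt).concaveOn
    have hjensen := hconc.2 (Set.mem_Ici.2 hlk_nonneg) (Set.mem_Ici.2 hlbk1)
      ha.le hb.le hab
    simp only [smul_eq_mul] at hjensen
    rw [hcomb] at hjensen
    -- hjensen : a * l_k ^ α + b * lbar(k+1) ^ α ≤ lbar k ^ α
    have hmul : l ⟨k, hkn'⟩ ^ α + ((n : ℝ) - (k + 1)) * lbar (k + 1) ^ α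
        ≤ ((n : ℝ) - k) * lbar k ^ α := by
      have := mul_le_mul_of_nonneg_left hjensen (by linarith : (0:ℝ) ≤ (n : ℝ) - k)
      rw [ha_def, hb_def] at this
      calc l ⟨k, hkn'⟩ ^ α + ((n : ℝ) - (k + 1)) * lbar (k + 1) ^ α
          = ((n : ℝ) - k) * (1 / ((n : ℝ) - k) * l ⟨k, hkn'⟩ ^ α
            + ((n : ℝ) - (k + 1)) / ((n : ℝ) - k) * lbar (k + 1) ^ α) := by
            field_simp
        _ ≤ ((n : ℝ) - k) * lbar k ^ α := this
    have hAle : (∑ i ∈ univ.filter (fun i : Fin n => (i : ℕ) < k + 1), (l i) ^ α)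
        + ((n : ℝ) - (k + 1)) * lbar (k + 1) ^ α
        ≤ (∑ i ∈ univ.filter (fun i : Fin n => (i : ℕ) < k), (l i) ^ α)
        + ((n : ℝ) - k) * lbar k ^ α := by
      rw [hsum_rpow]; linarith
    apply mul_le_mul_of_nonneg_left _ (by
      have : 0 < 1 - α := by linarith
      positivity)
    exact Real.logb_le_logb_of_le (by norm_num) hA1pos hAle
  · -- α > 1 : convex, A_k ≤ A_{k+1}, and 1/(1-α) < 0
    have hconv := convexOn_rpow hgt.le
    have hjensen := hconv.2 (Set.mem_Ici.2 hlk_nonneg) (Set.mem_Ici.2 hlbk1)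
      ha.le hb.le hab
    simp only [smul_eq_mul] at hjensen
    rw [hcomb] at hjensen
    have hmul : ((n : ℝ) - k) * lbar k ^ α
        ≤ l ⟨k, hkn'⟩ ^ α + ((n : ℝ) - (k + 1)) * lbar (k + 1) ^ α := by
      have := mul_le_mul_of_nonneg_left hjensen (by linarith : (0:ℝ) ≤ (n : ℝ) - k)
      rw [ha_def, hb_def] at this
      calc ((n : ℝ) - k) * lbar k ^ α
          ≤ ((n : ℝ) - k) * (1 / ((n : ℝ) - k) * l ⟨k, hkn'⟩ ^ α
            + ((n : ℝ) - (k + 1)) / ((n : ℝ) - k) * lbar (k + 1) ^ α) := this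
        _ = l ⟨k, hkn'⟩ ^ α + ((n : ℝ) - (k + 1)) * lbar (k + 1) ^ α := by
            field_simp
    have hAle : (∑ i ∈ univ.filter (fun i : Fin n => (i : ℕ) < k), (l i) ^ α)
        + ((n : ℝ) - k) * lbar k ^ α
        ≤ (∑ i ∈ univ.filter (fun i : Fin n => (i : ℕ) < k + 1), (l i) ^ α)
        + ((n : ℝ) - (k + 1)) * lbar (k + 1) ^ α := by
      rw [hsum_rpow]; linarith
    have hlog := Real.logb_le_logb_of_le (by norm_num : (1:ℝ) < 2) hA0pos hAle
    have hneg : 1 / (1 - α) ≤ 0 := by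
      apply div_nonpos_of_nonneg_of_nonpos <;> linarith
    exact mul_le_mul_of_nonpos_left hlog hneg
end

section
/- Let 𝒴 and 𝒵 be finite nonempty types, let p : 𝒴 × 𝒵 → ℝ be a joint probability mass function, and let q : 𝒴 × 𝒵 → ℝ be any variational conditional distribution, i.e. q(y|z) ≥ 0 for all (y,z), ∑_y q(y|z) = 1 for every z, and q(y|z) > 0 whenever p(y,z) > 0. Then the mutual information admits the variational lower bounds I(Y;Z) ≥ ∑_{(y,z) : p(y,z) > 0} p(y,z) · log( q(y|z) / p_Y(y) ) ≥ ∑_{(y,z) : p(y,z) > 0} p(y,z) · log q(y|z). -/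
open Finset

/-- Mutual information of a joint pmf on a product of two finite types. -/
noncomputable def mutualInfo {U V : Type*} [Fintype U] [Fintype V]
    (q : U × V → ℝ) : ℝ :=
  ∑ u : U, ∑ v : V,
    if 0 < q (u, v) then
      q (u, v) * Real.log (q (u, v) / ((∑ v', q (u, v')) * (∑ u', q (u', v))))
    else 0

/-- Variational lower bounds on the mutual information: for any variational
conditional distribution `q(y|z)`,
`I(Y;Z) ≥ ∑_{p(y,z)>0} p(y,z) log (q(y|z)/p_Y(y)) ≥ ∑_{p(y,z)>0} p(y,z) log q(y|z)`. -/
theorem mutualInfo_variational_lower_bounds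
    (𝒴 𝒵 : Type*) [Fintype 𝒴] [Fintype 𝒵] [Nonempty 𝒴] [Nonempty 𝒵]
    (p : 𝒴 × 𝒵 → ℝ) (hp0 : ∀ w, 0 ≤ p w) (hp1 : ∑ w, p w = 1)
    (q : 𝒴 × 𝒵 → ℝ) (hq0 : ∀ y z, 0 ≤ q (y, z))
    (hq1 : ∀ z, ∑ y, q (y, z) = 1)
    (hqpos : ∀ y z, 0 < p (y, z) → 0 < q (y, z)) :
    (∑ y : 𝒴, ∑ z : 𝒵,
        if 0 < p (y, z) then
          p (y, z) * Real.log (q (y, z) / (∑ z', p (y, z')))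
        else 0) ≤ mutualInfo p ∧
    (∑ y : 𝒴, ∑ z : 𝒵,
        if 0 < p (y, z) then p (y, z) * Real.log (q (y, z)) else 0) ≤
      (∑ y : 𝒴, ∑ z : 𝒵,
        if 0 < p (y, z) then
          p (y, z) * Real.log (q (y, z) / (∑ z', p (y, z')))
        else 0) := by
  classical
  have hsum : ∑ y : 𝒴, ∑ z : 𝒵, p (y, z) = 1 := by
    rw [← hp1]; exact (Fintype.sum_prod_type p).symm
  have hpYpos : ∀ y z, 0 < p (y, z) → 0 < ∑ z', p (y, z') := fun y z h =>
    h.trans_le (Finset.single_le_sum (fun z' _ => hp0 (y, z')) (Finset.mem_univ z))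
  have hpZpos : ∀ y z, 0 < p (y, z) → 0 < ∑ y', p (y', z) := fun y z h =>
    h.trans_le (Finset.single_le_sum (fun y' _ => hp0 (y', z)) (Finset.mem_univ y))
  have hpZ0 : ∀ z, 0 ≤ ∑ y', p (y', z) := fun z =>
    Finset.sum_nonneg fun y' _ => hp0 _
  have hpYle1 : ∀ y, (∑ z', p (y, z')) ≤ 1 := by
    intro y
    rw [← hsum]
    exact Finset.single_le_sum (f := fun y => ∑ z, p (y, z))
      (fun y' _ => Finset.sum_nonneg fun z _ => hp0 _) (Finset.mem_univ y)
  constructor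
  · -- first bound
    have hMI : (∑ y : 𝒴, ∑ z : 𝒵,
        if 0 < p (y, z) then
          p (y, z) * Real.log (q (y, z) / (∑ z', p (y, z')))
        else 0)
        ≤ mutualInfo p + ∑ y : 𝒴, ∑ z : 𝒵,
            (if 0 < p (y, z) then q (y, z) * (∑ y', p (y', z)) - p (y, z) else 0) := by
      unfold mutualInfo
      rw [← Finset.sum_add_distrib]
      refine Finset.sum_le_sum fun y _ => ?_
      rw [← Finset.sum_add_distrib]
      refine Finset.sum_le_sum fun z _ => ?_
      by_cases h : 0 < p (y, z)
      · simp only [h, if_pos]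
        have hq := hqpos y z h
        have hY := hpYpos y z h
        have hZ := hpZpos y z h
        have hlog : Real.log (q (y, z) * (∑ y', p (y', z)) / p (y, z))
            ≤ q (y, z) * (∑ y', p (y', z)) / p (y, z) - 1 :=
          Real.log_le_sub_one_of_pos (by positivity)
        have hmul : p (y, z) * Real.log (q (y, z) * (∑ y', p (y', z)) / p (y, z))
            ≤ q (y, z) * (∑ y', p (y', z)) - p (y, z) := by
          have := mul_le_mul_of_nonneg_left hlog h.le
          rwa [mul_sub, mul_one, mul_div_cancel₀ _ h.ne'] at this
        have e1 : Real.log (q (y, z) / (∑ z', p (y, z')))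
            = Real.log (q (y, z)) - Real.log (∑ z', p (y, z')) :=
          Real.log_div hq.ne' hY.ne'
        have e2 : Real.log (p (y, z) / ((∑ z', p (y, z')) * (∑ y', p (y', z))))
            = Real.log (p (y, z)) - (Real.log (∑ z', p (y, z')) + Real.log (∑ y', p (y', z))) := by
          rw [Real.log_div h.ne' (by positivity), Real.log_mul hY.ne' hZ.ne']
        have e3 : Real.log (q (y, z) * (∑ y', p (y', z)) / p (y, z))
            = Real.log (q (y, z)) + Real.log (∑ y', p (y', z)) - Real.log (p (y, z)) := by
          rw [Real.log_div (by positivity) h.ne', Real.log_mul hq.ne' hZ.ne']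
        rw [e1, e2]
        rw [e3] at hmul
        nlinarith [hmul]
      · simp [h]
    have hcorr : (∑ y : 𝒴, ∑ z : 𝒵,
        (if 0 < p (y, z) then q (y, z) * (∑ y', p (y', z)) - p (y, z) else 0)) ≤ 0 := by
      have step : (∑ y : 𝒴, ∑ z : 𝒵,
          (if 0 < p (y, z) then q (y, z) * (∑ y', p (y', z)) - p (y, z) else 0))
          ≤ ∑ y : 𝒴, ∑ z : 𝒵, (q (y, z) * (∑ y', p (y', z)) - p (y, z)) := by
        refine Finset.sum_le_sum fun y _ => Finset.sum_le_sum fun z _ => ?_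
        by_cases h : 0 < p (y, z)
        · simp [h]
        · push_neg at h
          have hp' : p (y, z) = 0 := le_antisymm h (hp0 _)
          rw [if_neg (show p (y, z) ≤ 0 from h).not_gt, hp', sub_zero]
          exact mul_nonneg (hq0 y z) (hpZ0 z)
      have htot : (∑ y : 𝒴, ∑ z : 𝒵, (q (y, z) * (∑ y', p (y', z)) - p (y, z))) = 0 := by
        have hA : (∑ y : 𝒴, ∑ z : 𝒵, q (y, z) * (∑ y', p (y', z))) = 1 := by
          rw [Finset.sum_comm]
          have : ∀ z : 𝒵, (∑ y : 𝒴, q (y, z) * (∑ y', p (y', z)))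
              = ∑ y', p (y', z) := by
            intro z
            rw [← Finset.sum_mul, hq1 z, one_mul]
          simp_rw [this]
          rw [Finset.sum_comm]; exact hsum
        simp only [Finset.sum_sub_distrib]
        rw [hA, hsum]; ring
      linarith
    linarith
  · -- second bound
    refine Finset.sum_le_sum fun y _ => Finset.sum_le_sum fun z _ => ?_
    by_cases h : 0 < p (y, z)
    · simp only [h, if_pos]
      have hq := hqpos y z h
      have hY := hpYpos y z h
      have e1 : Real.log (q (y, z) / (∑ z', p (y, z')))
          = Real.log (q (y, z)) - Real.log (∑ z', p (y, z')) :=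
        Real.log_div hq.ne' hY.ne'
      have hlogY : Real.log (∑ z', p (y, z')) ≤ 0 :=
        Real.log_nonpos hY.le (hpYle1 y)
      rw [e1]
      nlinarith [hlogY, h.le]
    · simp [h]
end
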